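/- The minimum number of nodes of a nontrivial symmetric simple FBAS (V,k) with quorum intersection that is resilient against m ≥ 1 ill-behaved nodes is 3m+1, attained with threshold k = 2m+1. -/

import Mathlib

open Set

variable {α : Type*}

/-- `(V, S)` is a federated Byzantine agreement system: every node `v ∈ V` has a
nonempty set of slices, each slice containing `v` and consisting of nodes of `V`. -/
def IsFBAS (V : Set α) (S : α → Set (Set α)) : Prop :=
  ∀ v ∈ V, (S v).Nonempty ∧ ∀ s ∈ S v, v ∈ s ∧ s ⊆ V

/-- A nonempty `Q ⊆ V` is a quorum if every member has a slice contained in `Q`. -/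
def IsQuorum (V : Set α) (S : α → Set (Set α)) (Q : Set α) : Prop :=
  Q.Nonempty ∧ Q ⊆ V ∧ ∀ v ∈ Q, ∃ s ∈ S v, s ⊆ Q

/-- Any two quorums have nonempty intersection. -/
def HasQuorumIntersection (V : Set α) (S : α → Set (Set α)) : Prop :=
  ∀ Q₁ Q₂, IsQuorum V S Q₁ → IsQuorum V S Q₂ → (Q₁ ∩ Q₂).Nonempty

/-- The slice function of the FBAS with the nodes of `D` deleted. -/
def deleteS (S : α → Set (Set α)) (D : Set α) : α → Set (Set α) :=
  fun v => (· \ D) '' S v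

/-- `D` is a dispensable set (DSet) of `(V, S)`. -/
def IsDSet (V : Set α) (S : α → Set (Set α)) (D : Set α) : Prop :=
  D ⊆ V ∧ HasQuorumIntersection (V \ D) (deleteS S D) ∧
    (IsQuorum V S (V \ D) ∨ D = V)

/-- `v` is `B`-intact: some DSet contains `B` but not `v`. -/
def Intact (V : Set α) (S : α → Set (Set α)) (B : Set α) (v : α) : Prop :=
  ∃ D, IsDSet V S D ∧ B ⊆ D ∧ v ∉ D

/-- Edge relation of the trust graph: `u → v` iff `v` lies in some slice of `u`. -/
def trustE (S : α → Set (Set α)) (u v : α) : Prop := ∃ s ∈ S u, v ∈ s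

/-- Reachability: reflexive-transitive closure of the edge relation. -/
def Reach (E : α → α → Prop) : α → α → Prop := Relation.ReflTransGen E

/-- `U` is strongly connected: any two of its nodes are mutually reachable. -/
def StronglyConn (E : α → α → Prop) (U : Set α) : Prop :=
  ∀ u ∈ U, ∀ v ∈ U, Reach E u v

/-- `C` is a strongly connected component of the graph on `V`: nonempty,
strongly connected, and no proper superset (within `V`) is strongly connected. -/
def IsSCC (V : Set α) (E : α → α → Prop) (C : Set α) : Prop :=
  C.Nonempty ∧ C ⊆ V ∧ StronglyConn E C ∧
    ∀ C', C ⊆ C' → C' ⊆ V → StronglyConn E C' → C' ⊆ C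

/-- `D` is reachable from `C` (as sets of nodes). -/
def SCCReach (E : α → α → Prop) (C D : Set α) : Prop :=
  ∃ c ∈ C, ∃ d ∈ D, Reach E c d

/-- A trust cluster: a subset of `V` closed under reachability in the trust graph. -/
def TrustCluster (V : Set α) (S : α → Set (Set α)) (Z : Set α) : Prop :=
  Z ⊆ V ∧ ∀ u ∈ Z, ∀ v, Reach (trustE S) u v → v ∈ Z

/-- Slice function of the symmetric simple FBAS `(V, k)`: the slices of `v` are
all `k`-element subsets of `V` containing `v`. -/
def symS (V : Set α) (k : ℕ) : α → Set (Set α) :=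
  fun v => {U | v ∈ U ∧ U ⊆ V ∧ U.ncard = k}

/-- A `B`-quorum: nonempty `Q ⊆ V` such that every member outside `B` has a slice in `Q`. -/
def IsBQuorum (V : Set α) (S : α → Set (Set α)) (B : Set α) (Q : Set α) : Prop :=
  Q.Nonempty ∧ Q ⊆ V ∧ ∀ v ∈ Q \ B, ∃ s ∈ S v, s ⊆ Q

/-- A `B`-intact set. -/
def IsBIntactSet (V : Set α) (S : α → Set (Set α)) (B U : Set α) : Prop :=
  U ⊆ V \ B ∧ (U = ∅ ∨ IsBQuorum V S B U) ∧
    ∀ Q Q', IsBQuorum V S B Q → IsBQuorum V S B Q' →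
      (Q ∩ U).Nonempty → (Q' ∩ U).Nonempty → (Q ∩ Q' ∩ U).Nonempty

/-- The `B`-subslice property. -/
def SubsliceProp (V : Set α) (S : α → Set (Set α)) (B : Set α) : Prop :=
  ∀ v ∈ V \ B, ∀ s ∈ S v, ∀ u ∈ s \ B, ∃ s' ∈ S u, s' ⊆ s

/-- `(V, S)` is resilient against `m` ill-behaved nodes: for every set `B` of at
most `m` nodes, every node outside `B` is `B`-intact. -/
def Resilient (V : Set α) (S : α → Set (Set α)) (m : ℕ) : Prop :=
  ∀ B ⊆ V, B.ncard ≤ m → ∀ v ∈ V \ B, Intact V S B v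

/-!
After deleting `D` from the symmetric simple FBAS `(V, k)`, a nonempty `Q ⊆ V \ D` is a quorum
exactly when `k ≤ |Q| + |D|`, so the deleted system has quorum intersection exactly when
`|V| + |D| < 2k`. A DSet `D ≠ V` must also leave the quorum `V \ D`, so
`k + |D| ≤ |V| < 2k - |D|`, whence `3|D| < |V|`. Resilience against `m` nodes produces such a
DSet containing at least `min (m, |V| - 1)` nodes, which forces `3m < |V|`. Conversely, for
`|V| = 3m + 1` and `k = 2m + 1` every set of at most `m` nodes satisfies both bounds and is
itself a DSet.
-/

lemma deleteS_empty (S : α → Set (Set α)) : deleteS S ∅ = S := by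
  funext v
  simp [deleteS]

section symS

variable {V D Q : Set α} {k : ℕ}

lemma isQuorum_deleteS_symS_iff (hV : V.Finite) (hD : D ⊆ V) (hk : 0 < k) :
    IsQuorum (V \ D) (deleteS (symS V k) D) Q ↔
      Q.Nonempty ∧ Q ⊆ V \ D ∧ k ≤ Q.ncard + D.ncard := by
  constructor
  · rintro ⟨⟨v, hv⟩, hQ, hslice⟩
    obtain ⟨-, ⟨s, ⟨-, hsV, hs⟩, rfl⟩, hsQ⟩ := hslice v hv
    have hsQD : s ⊆ Q ∪ D := fun x hx => by
      by_cases hxD : x ∈ D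
      · exact Or.inr hxD
      · exact Or.inl (hsQ ⟨hx, hxD⟩)
    refine ⟨⟨v, hv⟩, hQ, ?_⟩
    calc k = s.ncard := hs.symm
      _ ≤ (Q ∪ D).ncard := ncard_le_ncard hsQD ((hV.subset (hQ.trans sdiff_subset)).union
          (hV.subset hD))
      _ ≤ Q.ncard + D.ncard := ncard_union_le Q D
  · rintro ⟨hQne, hQ, hcard⟩
    have hQD : (Q ∪ D).ncard = Q.ncard + D.ncard :=
      ncard_union_eq (subset_sdiff.mp hQ).2 (hV.subset (hQ.trans sdiff_subset)) (hV.subset hD)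
    refine ⟨hQne, hQ, fun v hv => ?_⟩
    obtain ⟨s, hvs, hsQD, hs⟩ :=
      exists_subsuperset_card_eq (singleton_subset_iff.mpr (mem_union_left D hv))
        (by rwa [ncard_singleton]) (hQD ▸ hcard)
    refine ⟨s \ D, ⟨s, ⟨singleton_subset_iff.mp hvs, ?_, hs⟩, rfl⟩, ?_⟩
    · exact hsQD.trans (union_subset (hQ.trans sdiff_subset) hD)
    · rintro x ⟨hxs, hxD⟩
      exact (hsQD hxs).resolve_right hxD

lemma isQuorum_symS_iff (hV : V.Finite) (hk : 0 < k) :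
    IsQuorum V (symS V k) Q ↔ Q.Nonempty ∧ Q ⊆ V ∧ k ≤ Q.ncard := by
  simpa [deleteS_empty] using isQuorum_deleteS_symS_iff (D := ∅) (Q := Q) hV (empty_subset V) hk

lemma hasQuorumIntersection_deleteS_symS_iff (hV : V.Finite) (hD : D ⊆ V) (hDk : D.ncard < k) :
    HasQuorumIntersection (V \ D) (deleteS (symS V k) D) ↔ V.ncard + D.ncard < 2 * k := by
  have hVD : (V \ D).ncard = V.ncard - D.ncard := ncard_sdiff hD (hV.subset hD)
  have hDV : D.ncard ≤ V.ncard := ncard_le_ncard hD hV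
  have hquorum := fun Q => isQuorum_deleteS_symS_iff (Q := Q) hV hD (D.ncard.zero_le.trans_lt hDk)
  constructor
  · intro hQI
    by_contra! hlarge
    obtain ⟨Q₁, hQ₁, hQ₁card⟩ := exists_subset_card_eq (s := V \ D) (n := k - D.ncard)
      (by omega)
    obtain ⟨Q₂, hQ₂, hQ₂card⟩ := exists_subset_card_eq (s := (V \ D) \ Q₁) (n := k - D.ncard)
      (by rw [ncard_sdiff hQ₁ (hV.sdiff.subset hQ₁)]; omega)
    have hne : ∀ {Q : Set α}, Q.ncard = k - D.ncard → Q.Nonempty := fun h =>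
      nonempty_of_ncard_ne_zero (by omega)
    obtain ⟨x, hx₁, hx₂⟩ := hQI Q₁ Q₂ ((hquorum Q₁).mpr ⟨hne hQ₁card, hQ₁, by omega⟩)
      ((hquorum Q₂).mpr ⟨hne hQ₂card, hQ₂.trans sdiff_subset, by omega⟩)
    exact (hQ₂ hx₂).2 hx₁
  · intro hsmall Q₁ Q₂ h₁ h₂
    obtain ⟨-, hQ₁, hk₁⟩ := (hquorum Q₁).mp h₁
    obtain ⟨-, hQ₂, hk₂⟩ := (hquorum Q₂).mp h₂
    rw [← not_disjoint_iff_nonempty_inter]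
    intro hdisj
    have hunion := ncard_union_eq hdisj (hV.sdiff.subset hQ₁) (hV.sdiff.subset hQ₂)
    have hle : (Q₁ ∪ Q₂).ncard ≤ (V \ D).ncard := ncard_le_ncard (union_subset hQ₁ hQ₂) hV.sdiff
    omega

lemma hasQuorumIntersection_symS_iff (hV : V.Finite) (hk : 0 < k) :
    HasQuorumIntersection V (symS V k) ↔ V.ncard < 2 * k := by
  simpa [deleteS_empty] using
    hasQuorumIntersection_deleteS_symS_iff (D := ∅) hV (empty_subset V) (by simpa using hk)

lemma isDSet_symS_iff (hV : V.Finite) (hk : 0 < k) (hQI : HasQuorumIntersection V (symS V k))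
    (hDV : D ≠ V) :
    IsDSet V (symS V k) D ↔ D ⊆ V ∧ k + D.ncard ≤ V.ncard ∧ V.ncard + D.ncard < 2 * k := by
  have hVk := (hasQuorumIntersection_symS_iff hV hk).mp hQI
  constructor
  · rintro ⟨hD, hQID, hquorum | rfl⟩
    · have hVD := (isQuorum_symS_iff hV hk).mp hquorum
      rw [ncard_sdiff hD (hV.subset hD)] at hVD
      have hDcard : D.ncard ≤ V.ncard := ncard_le_ncard hD hV
      refine ⟨hD, by omega, ?_⟩
      exact (hasQuorumIntersection_deleteS_symS_iff hV hD (by omega)).mp hQID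
    · exact absurd rfl hDV
  · rintro ⟨hD, hquorum, hsmall⟩
    have hVD : (V \ D).ncard = V.ncard - D.ncard := ncard_sdiff hD (hV.subset hD)
    refine ⟨hD, (hasQuorumIntersection_deleteS_symS_iff hV hD (by omega)).mpr hsmall,
      Or.inl ((isQuorum_symS_iff hV hk).mpr ⟨nonempty_of_ncard_ne_zero ?_, sdiff_subset, ?_⟩)⟩
    all_goals omega

end symS

section Resilient

variable {V : Set α} {k m : ℕ}

lemma Resilient.three_mul_lt_ncard_symS (hV : V.Finite) (hk : 1 < k) (hkV : k ≤ V.ncard)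
    (hQI : HasQuorumIntersection V (symS V k)) (hres : Resilient V (symS V k) m) :
    3 * m < V.ncard := by
  obtain ⟨B, hBV, hB⟩ := exists_subset_card_eq (s := V) (n := min m (V.ncard - 1)) (by omega)
  obtain ⟨v, hv⟩ : (V \ B).Nonempty :=
    nonempty_of_ncard_ne_zero (by rw [ncard_sdiff hBV (hV.subset hBV)]; omega)
  obtain ⟨D, hD, hBD, hvD⟩ := hres B hBV (by omega) v hv
  obtain ⟨hDV, hquorum, hsmall⟩ :=
    (isDSet_symS_iff hV (by omega) hQI (ne_of_mem_of_not_mem' hv.1 hvD).symm).mp hD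
  have hBD : B.ncard ≤ D.ncard := ncard_le_ncard hBD (hV.subset hDV)
  omega

lemma resilient_symS_of_ncard (hV : V.Finite) (hquorum : k + m ≤ V.ncard)
    (hsmall : V.ncard + m < 2 * k) : Resilient V (symS V k) m := by
  have hQI : HasQuorumIntersection V (symS V k) :=
    (hasQuorumIntersection_symS_iff hV (by omega)).mpr (by omega)
  intro B hBV hBm v hv
  refine ⟨B, ?_, subset_rfl, hv.2⟩
  exact (isDSet_symS_iff hV (by omega) hQI (ne_of_mem_of_not_mem' hv.1 hv.2).symm).mpr
    ⟨hBV, by omega, by omega⟩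

end Resilient

theorem symmetric_simple_resilience_general (m : ℕ) :
    (∀ (V : Set α) (k : ℕ), V.Finite → 1 < k → k ≤ V.ncard →
      HasQuorumIntersection V (symS V k) → Resilient V (symS V k) m →
      3 * m + 1 ≤ V.ncard) ∧
    (∀ V : Set α, V.Finite → V.ncard = 3 * m + 1 →
      HasQuorumIntersection V (symS V (2 * m + 1)) ∧
        Resilient V (symS V (2 * m + 1)) m) := by
  constructor
  · intro V k hV hk hkV hQI hres
    exact hres.three_mul_lt_ncard_symS hV hk hkV hQI
  · intro V hV hcard
    exact ⟨(hasQuorumIntersection_symS_iff hV (by omega)).mpr (by omega),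
      resilient_symS_of_ncard hV (by omega) (by omega)⟩

/-- The minimum number of nodes of a nontrivial symmetric simple
FBAS `(V, k)` with quorum intersection that is resilient against `m ≥ 1`
ill-behaved nodes is `3m + 1`, attained with threshold `k = 2m + 1`. -/
theorem symmetric_simple_resilience (m : ℕ) (hm : 1 ≤ m) :
    (∀ (V : Set α) (k : ℕ), V.Finite → 1 < k → k ≤ V.ncard →
      HasQuorumIntersection V (symS V k) → Resilient V (symS V k) m →
      3 * m + 1 ≤ V.ncard) ∧
    (∀ V : Set α, V.Finite → V.ncard = 3 * m + 1 →
      HasQuorumIntersection V (symS V (2 * m + 1)) ∧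
        Resilient V (symS V (2 * m + 1)) m) :=
  symmetric_simple_resilience_general m
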